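/- arXiv:1508.02492 — 2 statements merged into one kernel-verified Lean document; each statement's English description precedes it below -/
import Mathlib

section
/- For every x ∈ (0,1], the improper integral of the EBP EXIT curve converges and satisfies ∫₀ˣ h^EBP(t)·ε′(t) dt = −k·U(x; ε(x)); that is, the area under the EBP EXIT curve up to the point parametrized by x equals −k times the potential function evaluated on the EBP EXIT curve at x. In particular, along the curve d/dt [U(t; ε(t))] = −(1/k)·h^EBP(t)·ε′(t) for t ∈ (0,1), and U(t; ε(t)) → 0 as t → 0⁺. -/
open MeasureTheory

/-- Edge-perspective Poisson counter-node degree distribution: ρ(z) = exp(−γ(1−z)). -/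
noncomputable def rho (γ z : ℝ) : ℝ := Real.exp (-γ * (1 - z))

/-- Combined counter-node DE update. -/
noncomputable def g (k : ℕ) (γ x : ℝ) : ℝ :=
  1 - rho γ (1 - (1 - rho γ (1 - x)) ^ (k - 1))

/-- Potential function U(x; ε) = x·g(x) − ∫₀ˣ g(z) dz − (ε/k)·g(x)^k. -/
noncomputable def U (k : ℕ) (γ x ε : ℝ) : ℝ :=
  x * g k γ x - (∫ z in (0:ℝ)..x, g k γ z) - ε / k * g k γ x ^ k

/-- EBP EXIT curve parametrization ε(x) = x / g(x)^(k−1). -/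
noncomputable def epsC (k : ℕ) (γ x : ℝ) : ℝ := x / g k γ x ^ (k - 1)

/-- EBP EXIT curve value h^EBP(x) = g(x)^k. -/
noncomputable def hEBP (k : ℕ) (γ x : ℝ) : ℝ := g k γ x ^ k

lemma g_eq (m : ℕ) (γ x : ℝ) :
    g (m+2) γ x = 1 - Real.exp (-γ * (1 - Real.exp (-γ*x))^(m+1)) := by
  simp only [g, rho, sub_sub_cancel]
  norm_num

noncomputable def gD (m : ℕ) (γ x : ℝ) : ℝ :=
  γ^2 * (m+1) * Real.exp (-γ*x) * (1 - Real.exp (-γ*x))^m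
    * Real.exp (-γ * (1 - Real.exp (-γ*x))^(m+1))

lemma hasDerivAt_g (m : ℕ) (γ x : ℝ) :
    HasDerivAt (g (m+2) γ) (gD m γ x) x := by
  have h1 : HasDerivAt (fun x : ℝ => -γ * x) (-γ) x := by
    simpa using (hasDerivAt_id x).const_mul (-γ)
  have h2 := h1.exp
  have h3 := (hasDerivAt_const x (1:ℝ)).sub h2
  have h4 := h3.pow (m+1)
  have h5 := (h4.const_mul (-γ)).exp
  have h6 := (hasDerivAt_const x (1:ℝ)).sub h5
  have : HasDerivAt (fun x : ℝ => 1 - Real.exp (-γ * (1 - Real.exp (-γ*x))^(m+1)))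
      (gD m γ x) x := by
    refine h6.congr_deriv ?_
    simp only [Nat.add_sub_cancel, gD, Pi.sub_apply, Pi.pow_apply]
    push_cast
    ring
  exact (funext (g_eq m γ) : g (m+2) γ = _) ▸ this

/-- Area under the EBP EXIT curve: for x ∈ (0,1], the improper integral
    ∫₀ˣ h^EBP(t)·ε′(t) dt converges and equals −k·U(x; ε(x)); along the curve
    d/dt U(t; ε(t)) = −(1/k)·h^EBP(t)·ε′(t), and U(t; ε(t)) → 0 as t → 0⁺. -/
theorem stmt9 (k : ℕ) (hk : 2 ≤ k) (γ : ℝ) (hγ : 0 < γ)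
    (x : ℝ) (hx : x ∈ Set.Ioc (0:ℝ) 1) :
    IntegrableOn (fun t => hEBP k γ t * deriv (epsC k γ) t) (Set.Ioc 0 x) ∧
    (∫ t in Set.Ioc (0:ℝ) x, hEBP k γ t * deriv (epsC k γ) t)
      = -(k : ℝ) * U k γ x (epsC k γ x) ∧
    (∀ t ∈ Set.Ioo (0:ℝ) 1,
      HasDerivAt (fun s => U k γ s (epsC k γ s))
        (-(1 / (k : ℝ)) * hEBP k γ t * deriv (epsC k γ) t) t) ∧
    Filter.Tendsto (fun t => U k γ t (epsC k γ t))
      (nhdsWithin 0 (Set.Ioi 0)) (nhds 0) := by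
  obtain ⟨m, rfl⟩ : ∃ m, k = m + 2 := ⟨k - 2, by omega⟩
  set G : ℝ → ℝ := g (m+2) γ with hGdef
  set G' : ℝ → ℝ := gD m γ with hG'def
  have hK : ((m:ℝ) + 2) ≠ 0 := by positivity
  have hKc : ((m+2 : ℕ) : ℝ) = (m:ℝ) + 2 := by push_cast; ring
  have hG : ∀ t, HasDerivAt G (G' t) t := fun t => hasDerivAt_g m γ t
  have hGc : Continuous G := by
    rw [continuous_iff_continuousAt]; exact fun t => (hG t).continuousAt
  have hG'c : Continuous G' := by unfold G'; unfold gD; fun_prop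
  have hGpos : ∀ t : ℝ, 0 < t → 0 < G t := by
    intro t ht
    rw [hGdef, g_eq]
    have h1 : Real.exp (-γ * t) < 1 := by
      rw [Real.exp_lt_one_iff]; nlinarith
    have h2 : 0 < (1 - Real.exp (-γ * t)) ^ (m+1) := pow_pos (by linarith) _
    have : Real.exp (-γ * (1 - Real.exp (-γ*t))^(m+1)) < 1 := by
      rw [Real.exp_lt_one_iff]; nlinarith
    linarith
  have hG0 : G 0 = 0 := by rw [hGdef, g_eq]; simp
  -- φ and Fs
  set φ : ℝ → ℝ := fun t => G t - ((m:ℝ)+1) * t * G' t with hφdef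
  have hφc : Continuous φ := by
    apply hGc.sub; fun_prop
  set Fs : ℝ → ℝ := fun t => (1 - 1/((m:ℝ)+2)) * t * G t - ∫ z in (0:ℝ)..t, G z
    with hFsdef
  have hFs : ∀ t, HasDerivAt Fs (-(1/((m:ℝ)+2)) * φ t) t := by
    intro t
    have h1 : HasDerivAt (fun s : ℝ => (1 - 1/((m:ℝ)+2)) * (s * G s))
        ((1 - 1/((m:ℝ)+2)) * (1 * G t + t * G' t)) t :=
      ((hasDerivAt_id t).mul (hG t)).const_mul _
    have h2 : HasDerivAt (fun s : ℝ => ∫ z in (0:ℝ)..s, G z) (G t) t :=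
      (hGc.integral_hasStrictDerivAt 0 t).hasDerivAt
    have hfun : Fs = fun s => (1 - 1/((m:ℝ)+2)) * (s * G s) - ∫ z in (0:ℝ)..s, G z := by
      funext s; rw [hFsdef]; ring_nf
    have hval : -(1/((m:ℝ)+2)) * φ t
        = (1 - 1/((m:ℝ)+2)) * (1 * G t + t * G' t) - G t := by
      rw [hφdef]; field_simp; ring
    rw [hfun, hval]
    exact h1.sub h2
  have hFs0 : Fs 0 = 0 := by simp [hFsdef]
  -- U along the curve equals Fs for t > 0
  have hU_eq : ∀ t : ℝ, 0 < t → U (m+2) γ t (epsC (m+2) γ t) = Fs t := by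
    intro t ht
    have hGne : G t ≠ 0 := ne_of_gt (hGpos t ht)
    simp only [U, epsC, hFsdef, Nat.add_sub_cancel, hKc, ← hGdef, (by omega : m + 2 - 1 = m + 1)]
    field_simp
    ring
  -- derivative of epsC for t > 0
  have heps : ∀ t : ℝ, 0 < t → HasDerivAt (epsC (m+2) γ)
      ((1 * G t ^ (m+1) - t * (((m:ℝ)+1) * G t ^ m * G' t)) / (G t ^ (m+1)) ^ 2) t := by
    intro t ht
    have hGne : G t ^ (m+1) ≠ 0 := pow_ne_zero _ (ne_of_gt (hGpos t ht))
    have := (hasDerivAt_id t).div ((hG t).pow (m+1)) hGne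
    simp only [Nat.add_sub_cancel, id_eq] at this
    refine this.congr_deriv ?_
    simp only [Pi.pow_apply]
    push_cast
    ring
  have hkey : ∀ t : ℝ, 0 < t → hEBP (m+2) γ t * deriv (epsC (m+2) γ) t = φ t := by
    intro t ht
    have hGne : G t ≠ 0 := ne_of_gt (hGpos t ht)
    rw [(heps t ht).deriv]
    simp only [hEBP, ← hGdef, hφdef]
    field_simp
    ring
  have hle : (0:ℝ) ≤ x := le_of_lt hx.1
  -- integrability
  have hint : IntegrableOn φ (Set.Ioc 0 x) := hφc.integrableOn_Ioc
  have hIOn : IntegrableOn (fun t => hEBP (m+2) γ t * deriv (epsC (m+2) γ) t)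
      (Set.Ioc 0 x) := by
    apply hint.congr_fun (fun t ht => (hkey t ht.1).symm) measurableSet_Ioc
  refine ⟨hIOn, ?_, ?_, ?_⟩
  · -- integral value
    have h1 : (∫ t in Set.Ioc (0:ℝ) x, hEBP (m+2) γ t * deriv (epsC (m+2) γ) t)
        = ∫ t in Set.Ioc (0:ℝ) x, φ t :=
      setIntegral_congr_fun measurableSet_Ioc (fun t ht => hkey t ht.1)
    have h2 : (∫ t in Set.Ioc (0:ℝ) x, φ t) = ∫ t in (0:ℝ)..x, φ t :=
      (intervalIntegral.integral_of_le hle).symm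
    have h3 : (∫ t in (0:ℝ)..x, -(1/((m:ℝ)+2)) * φ t) = Fs x - Fs 0 :=
      intervalIntegral.integral_eq_sub_of_hasDerivAt (fun t _ => hFs t)
        (by apply Continuous.intervalIntegrable; fun_prop)
    rw [intervalIntegral.integral_const_mul, hFs0, sub_zero] at h3
    have h4 : (∫ t in (0:ℝ)..x, φ t) = -((m:ℝ)+2) * Fs x := by
      field_simp at h3 ⊢
      linarith [h3]
    rw [h1, h2, h4, hU_eq x hx.1, hKc]
  · -- derivative along the curve
    intro t ht
    have hval : -(1 / ((m+2:ℕ) : ℝ)) * hEBP (m+2) γ t * deriv (epsC (m+2) γ) t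
        = -(1/((m:ℝ)+2)) * φ t := by
      rw [mul_assoc, hkey t ht.1, hKc]
    rw [hval]
    apply (hFs t).congr_of_eventuallyEq
    filter_upwards [isOpen_Ioi.mem_nhds ht.1] with s hs
    exact hU_eq s hs
  · -- limit at 0+
    have h0 : Filter.Tendsto Fs (nhdsWithin 0 (Set.Ioi 0)) (nhds 0) := by
      have := (hFs 0).continuousAt.continuousWithinAt (s := Set.Ioi (0:ℝ))
      rw [ContinuousWithinAt, hFs0] at this
      exact this
    apply h0.congr'
    filter_upwards [self_mem_nhdsWithin] with t ht
    exact (hU_eq t ht).symm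
end

section
/- Let ε̄ = ε(x*) be the area threshold, and let x ∈ (0,1] be the largest fixed point in [0,1] of the density-evolution recursion z = f(g(z); ε̄), assumed to be strictly positive. Define, for z ∈ (0,1], the residual EBP EXIT curve by ε̃(z) = z·(g(x)/g(zx))^(k−1) and h̃(z) = (g(zx)/g(x))^k (these come from the residual counter-node degree distribution ρ̃(z) = 1 − g(x − zx)/g(x), via 1 − ρ̃(1 − z) = g(zx)/g(x)). Then the area under the residual EBP EXIT curve is zero: the improper integral ∫₀¹ h̃(z)·ε̃′(z) dz = 0. -/
open MeasureTheory

/-- Flow-node DE update: f(y; ε) = ε · y^(k−1). -/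
noncomputable def f (k : ℕ) (ε y : ℝ) : ℝ := ε * y ^ (k - 1)

/-- Residual EBP EXIT curve parametrization ε̃(z) = z·(g(x)/g(zx))^(k−1),
    i.e. ε̃(z) = z / (1 − ρ̃(1 − z))^(k−1) with 1 − ρ̃(1 − z) = g(zx)/g(x). -/
noncomputable def epsTilde (k : ℕ) (γ x z : ℝ) : ℝ :=
  z * (g k γ x / g k γ (z * x)) ^ (k - 1)

/-- Residual EBP EXIT curve value h̃(z) = (g(zx)/g(x))^k = (1 − ρ̃(1 − z))^k. -/
noncomputable def hTilde (k : ℕ) (γ x z : ℝ) : ℝ :=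
  (g k γ (z * x) / g k γ x) ^ k

/-! The largest fixed point `x` is `x*`: a positive fixed point lies on the EBP curve at height
`ε̄ = ε(x*)`, so `x` cannot exceed `x*`, while `x*` is itself a fixed point. The residual curve
is a rescaling of the EBP curve, `ε̃(z) = (g(x)^(k-1) / x) ε(zx)` and `h̃(z) = h^EBP(zx) / g(x)^k`,
so the substitution `t = zx` turns the residual area into a multiple of the area
`∫₀^{x*} h^EBP dε = 0`. -/

open Set

section Rescaling

variable {E : Type*} [NormedAddCommGroup E] {φ : ℝ → E} {a : ℝ}

theorem integrableOn_Ioc_comp_mul_right (ha : 0 < a) (h : IntegrableOn φ (Ioc 0 a)) :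
    IntegrableOn (fun z => φ (z * a)) (Ioc 0 1) := by
  rw [← intervalIntegrable_iff_integrableOn_Ioc_of_le zero_le_one]
  rw [← intervalIntegrable_iff_integrableOn_Ioc_of_le ha.le] at h
  simpa [ha.ne'] using h.comp_mul_right (c := a)

theorem setIntegral_Ioc_comp_mul_right [NormedSpace ℝ E] (ha : 0 < a) :
    ∫ z in Ioc 0 1, φ (z * a) = a⁻¹ • ∫ t in Ioc 0 a, φ t := by
  rw [← intervalIntegral.integral_of_le zero_le_one, ← intervalIntegral.integral_of_le ha.le,
    intervalIntegral.integral_comp_mul_right φ ha.ne', zero_mul, one_mul]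

end Rescaling

section CounterBraid

variable {k : ℕ} {γ : ℝ}

theorem one_sub_rho_one_sub_pos (hγ : 0 < γ) {t : ℝ} (ht : 0 < t) : 0 < 1 - rho γ (1 - t) := by
  have : -γ * t < 0 := by nlinarith
  rw [rho, sub_sub_cancel]
  exact sub_pos.2 (Real.exp_lt_one_iff.2 this)

theorem g_pos (hγ : 0 < γ) {t : ℝ} (ht : 0 < t) : 0 < g k γ t :=
  one_sub_rho_one_sub_pos hγ (pow_pos (one_sub_rho_one_sub_pos hγ ht) _)

theorem differentiable_g : Differentiable ℝ (g k γ) := by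
  unfold g rho
  fun_prop

theorem differentiableAt_epsC (hγ : 0 < γ) {t : ℝ} (ht : 0 < t) :
    DifferentiableAt ℝ (epsC k γ) t :=
  differentiableAt_id.div (differentiable_g t |>.pow _) (pow_ne_zero _ (g_pos hγ ht).ne')

theorem eq_f_g_iff_epsC_eq (hγ : 0 < γ) {ε t : ℝ} (ht : 0 < t) :
    t = f k ε (g k γ t) ↔ epsC k γ t = ε := by
  rw [f, epsC, div_eq_iff (pow_ne_zero _ (g_pos hγ ht).ne')]

theorem eq_of_isGreatest_fixedPoints {xstar x : ℝ} (hγ : 0 < γ)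
    (hxstar : xstar ∈ Ioc (0 : ℝ) 1)
    (hnox : ¬ ∃ x' ∈ Ioc xstar 1, epsC k γ x' = epsC k γ xstar)
    (hfix : IsGreatest {z ∈ Icc (0 : ℝ) 1 | z = f k (epsC k γ xstar) (g k γ z)} x) :
    x = xstar := by
  have hxstar_le : xstar ≤ x :=
    hfix.2 ⟨Ioc_subset_Icc_self hxstar, (eq_f_g_iff_epsC_eq hγ hxstar.1).2 rfl⟩
  have hx_on_curve : epsC k γ x = epsC k γ xstar :=
    (eq_f_g_iff_epsC_eq hγ (hxstar.1.trans_le hxstar_le)).1 hfix.1.2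
  exact le_antisymm (not_lt.1 fun hlt => hnox ⟨x, ⟨hlt, hfix.1.1.2⟩, hx_on_curve⟩) hxstar_le

theorem epsTilde_eq_epsC_comp_mul {x : ℝ} (hx : x ≠ 0) :
    epsTilde k γ x = fun z => g k γ x ^ (k - 1) / x * epsC k γ (z * x) := by
  funext z
  rw [epsTilde, epsC, div_pow]
  field_simp

theorem deriv_epsTilde (hγ : 0 < γ) {x z : ℝ} (hx : 0 < x) (hz : 0 < z) :
    deriv (epsTilde k γ x) z = g k γ x ^ (k - 1) * deriv (epsC k γ) (z * x) := by
  have hcomp : HasDerivAt (fun w => epsC k γ (w * x)) (deriv (epsC k γ) (z * x) * x) z :=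
    HasDerivAt.comp (h₂ := fun w => epsC k γ w) z
      (differentiableAt_epsC hγ (mul_pos hz hx)).hasDerivAt (hasDerivAt_mul_const x)
  rw [epsTilde_eq_epsC_comp_mul hx.ne', (hcomp.const_mul _).deriv]
  field_simp

theorem hTilde_mul_deriv_epsTilde (hγ : 0 < γ) {x z : ℝ} (hx : 0 < x) (hz : 0 < z) :
    hTilde k γ x z * deriv (epsTilde k γ x) z
      = g k γ x ^ (k - 1) / g k γ x ^ k * (hEBP k γ (z * x) * deriv (epsC k γ) (z * x)) := by
  rw [deriv_epsTilde hγ hx hz, hTilde, hEBP, div_pow]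
  ring

end CounterBraid

theorem stmt11_general (k : ℕ) (γ : ℝ) (hγ : 0 < γ)
    (xstar : ℝ) (hxstar : xstar ∈ Set.Ioc (0:ℝ) 1)
    (hconv : IntegrableOn (fun t => hEBP k γ t * deriv (epsC k γ) t)
      (Set.Ioc 0 xstar))
    (harea : (∫ t in Set.Ioc (0:ℝ) xstar, hEBP k γ t * deriv (epsC k γ) t) = 0)
    (hnox : ¬ ∃ x' ∈ Set.Ioc xstar 1, epsC k γ x' = epsC k γ xstar)
    (x : ℝ)
    (hfix : IsGreatest
      {z ∈ Set.Icc (0:ℝ) 1 | z = f k (epsC k γ xstar) (g k γ z)} x) :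
    IntegrableOn (fun z => hTilde k γ x z * deriv (epsTilde k γ x) z)
      (Set.Ioc 0 1) ∧
    (∫ z in Set.Ioc (0:ℝ) 1, hTilde k γ x z * deriv (epsTilde k γ x) z) = 0 := by
  obtain rfl := eq_of_isGreatest_fixedPoints hγ hxstar hnox hfix
  have hEq : EqOn
      (fun z => g k γ x ^ (k - 1) / g k γ x ^ k * (hEBP k γ (z * x) * deriv (epsC k γ) (z * x)))
      (fun z => hTilde k γ x z * deriv (epsTilde k γ x) z) (Ioc 0 1) :=
    fun z hz => (hTilde_mul_deriv_epsTilde hγ hxstar.1 hz.1).symm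
  refine ⟨IntegrableOn.congr_fun ((integrableOn_Ioc_comp_mul_right hxstar.1 hconv).const_mul _)
    hEq measurableSet_Ioc, ?_⟩
  rw [← setIntegral_congr_fun measurableSet_Ioc hEq, integral_const_mul,
    setIntegral_Ioc_comp_mul_right (φ := fun t => hEBP k γ t * deriv (epsC k γ) t) hxstar.1,
    harea, smul_zero, mul_zero]

/-- At the area threshold ε̄ = ε(x*), if x is the largest fixed point of
    z = f(g(z); ε̄) in [0,1] and x > 0, then the area under the residual EBP
    EXIT curve (for the expected residual graph when the peeling decoder stops)
    is zero: ∫₀¹ h̃(z)·ε̃′(z) dz = 0 as a convergent improper integral. -/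
theorem stmt11 (k : ℕ) (hk : 2 ≤ k) (γ : ℝ) (hγ : 0 < γ)
    (xstar : ℝ) (hxstar : xstar ∈ Set.Ioc (0:ℝ) 1)
    (hconv : IntegrableOn (fun t => hEBP k γ t * deriv (epsC k γ) t)
      (Set.Ioc 0 xstar))
    (harea : (∫ t in Set.Ioc (0:ℝ) xstar, hEBP k γ t * deriv (epsC k γ) t) = 0)
    (hnox : ¬ ∃ x' ∈ Set.Ioc xstar 1, epsC k γ x' = epsC k γ xstar)
    (x : ℝ)
    (hfix : IsGreatest
      {z ∈ Set.Icc (0:ℝ) 1 | z = f k (epsC k γ xstar) (g k γ z)} x)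
    (hxpos : 0 < x) :
    IntegrableOn (fun z => hTilde k γ x z * deriv (epsTilde k γ x) z)
      (Set.Ioc 0 1) ∧
    (∫ z in Set.Ioc (0:ℝ) 1, hTilde k γ x z * deriv (epsTilde k γ x) z) = 0 :=
  stmt11_general k γ hγ xstar hxstar hconv harea hnox x hfix
end
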